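/- Every countable binary-conflict-free net has a ⊑₀^∞-largest FS-process: there exists a (possibly infinite) firing sequence ρ such that σ ⊑₀^∞ ρ for every firing sequence σ of the net. -/

import Mathlib

open Relation

/-- A place/transition net with place type `S` and transition type `T`. -/
structure Net (S T : Type) where
  /-- arc weight from place `s` to transition `t` -/
  pre : T → S → ℕ
  /-- arc weight from transition `t` to place `s` -/
  post : T → S → ℕ
  /-- the initial marking -/
  M0 : S → ℕ
  pre_finite : ∀ t, {s | pre t s > 0}.Finite
  pre_nonempty : ∀ t, ∃ s, pre t s > 0
  post_finite : ∀ t, {s | post t s > 0}.Finite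

namespace Net

variable {S T : Type} (N : Net S T)

/-- the singleton step `{t}` is enabled at marking `M` -/
def Enabled (t : T) (M : S → ℕ) : Prop := ∀ s, N.pre t s ≤ M s

/-- the two-element multiset step `{t,u}` is enabled at marking `M` -/
def Enabled2 (t u : T) (M : S → ℕ) : Prop := ∀ s, N.pre t s + N.pre u s ≤ M s

/-- firing transition `t` leads from marking `M` to marking `M'` -/
def Fires (t : T) (M M' : S → ℕ) : Prop :=
  N.Enabled t M ∧ M' = fun s => M s - N.pre t s + N.post t s

/-- firing the finite transition sequence `σ` leads from `M` to `M'` -/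
inductive FiresList : (S → ℕ) → List T → (S → ℕ) → Prop
  | nil (M : S → ℕ) : FiresList M [] M
  | cons {M M₁ M' : S → ℕ} {t : T} {σ : List T} :
      N.Fires t M M₁ → FiresList M₁ σ M' → FiresList M (t :: σ) M'

/-- a marking is reachable -/
def Reachable (M : S → ℕ) : Prop := ∃ σ : List T, N.FiresList N.M0 σ M

/-- `σ` is a finite firing sequence of `N` -/
def FS (σ : List T) : Prop := ∃ M, N.FiresList N.M0 σ M

/-- `σ` is a (possibly infinite) firing sequence of `N` -/
def FSInf (σ : Stream'.Seq T) : Prop := ∀ n, N.FS (σ.take n)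

/-- adjacency `≡₀` on finite firing sequences -/
def Adj (σ ρ : List T) : Prop :=
  ∃ (α β : List T) (t u : T) (M : S → ℕ),
    σ = α ++ t :: u :: β ∧ ρ = α ++ u :: t :: β ∧
    N.FiresList N.M0 α M ∧ N.Enabled2 t u M ∧ N.FS σ ∧ N.FS ρ

/-- adjacency `≡₀` on possibly infinite firing sequences -/
def AdjSeq (σ ρ : Stream'.Seq T) : Prop :=
  ∃ (α : List T) (β : Stream'.Seq T) (t u : T) (M : S → ℕ),
    σ = (Stream'.Seq.ofList (α ++ [t, u])).append β ∧
    ρ = (Stream'.Seq.ofList (α ++ [u, t])).append β ∧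
    N.FiresList N.M0 α M ∧ N.Enabled2 t u M ∧ N.FSInf σ ∧ N.FSInf ρ

end Net

/-- the finite sequence `l` is a prefix of the possibly infinite sequence `s` -/
def ListPrefixSeq {T : Type} (l : List T) (s : Stream'.Seq T) : Prop :=
  s.take l.length = l

namespace Net

variable {S T : Type} (N : Net S T)

/-- the preorder `⊑₀^∞` on possibly infinite firing sequences -/
def Sqsubseteq0 (σ ρ : Stream'.Seq T) : Prop :=
  ∀ σ'' : List T, N.FS σ'' → ListPrefixSeq σ'' σ →
    ∃ σ' ρ' : List T, N.FS σ' ∧ N.FS ρ' ∧ σ'' <+: σ' ∧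
      ReflTransGen N.Adj σ' ρ' ∧ ListPrefixSeq ρ' ρ

end Net

/-- `N` is binary-conflict-free: any two distinct transitions individually
enabled at a reachable marking are enabled together as a step. -/
def Net.BinaryConflictFree {S T : Type} (N : Net S T) : Prop :=
  ∀ M, N.Reachable M → ∀ t u : T, t ≠ u →
    N.Enabled t M → N.Enabled u M → N.Enabled2 t u M


/-! Enumerate the transitions by `g : ℕ → Option T` and let `ρ` be the limit of a fair scheduler
that, at step `n`, appends the transition `g n.unpair.1` whenever the result is still a firing
sequence; each index is thus tried infinitely often. Binary-conflict-freeness makes enabled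
transitions persistent: firing transitions other than `t` never disables `t`, and `t` can then be
swapped forward past them one adjacency at a time. So if a prefix of `ρ` is `≡₀*`-equivalent to
`π ++ δ` and `π` can be followed by `t`, then either `t` already occurs in `δ` or, staying enabled,
it is eventually fired by the scheduler; in both cases some prefix of `ρ` is equivalent to
`π ++ t :: δ'`. Induction along any finite firing sequence gives `σ ⊑₀^∞ ρ`. -/

namespace Stream'.Seq

variable {α : Type}

open Classical in
/-- The union of a `<+:`-chain of lists `l`. -/
noncomputable def prefixLimit (l : ℕ → List α) : Stream'.Seq α :=
  ⟨fun i => if h : ∃ n, i < (l n).length then some ((l h.choose)[i]'h.choose_spec) else none, by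
    intro i hi
    dsimp only at hi ⊢
    rw [dif_neg]
    rintro ⟨n, hn⟩
    rw [dif_pos ⟨n, by omega⟩] at hi
    exact Option.some_ne_none _ hi⟩

variable {l : ℕ → List α}

open Classical in
theorem get?_prefixLimit (i : ℕ) : (prefixLimit l).get? i =
    if h : ∃ n, i < (l n).length then some ((l h.choose)[i]'h.choose_spec) else none :=
  rfl

theorem eventually_getElem?_eq_get?_prefixLimit (hl : ∀ ⦃m n⦄, m ≤ n → l m <+: l n) (i : ℕ) :
    ∀ᶠ n in Filter.atTop, (l n)[i]? = (prefixLimit l).get? i := by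
  by_cases h : ∃ n, i < (l n).length
  · filter_upwards [Filter.eventually_ge_atTop h.choose] with n hn
    rw [get?_prefixLimit, dif_pos h, (hl hn).getElem h.choose_spec]
    exact List.getElem?_eq_getElem _
  · refine Filter.Eventually.of_forall fun n => ?_
    rw [get?_prefixLimit, dif_neg h]
    exact List.getElem?_eq_none (not_lt.1 fun hn => h ⟨n, hn⟩)

theorem eventually_take_prefixLimit (hl : ∀ ⦃m n⦄, m ≤ n → l m <+: l n) (k : ℕ) :
    ∀ᶠ n in Filter.atTop, (prefixLimit l).take k = (l n).take k := by
  have hk := (Filter.eventually_all_finset (Finset.range k)).2 fun i _ =>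
    eventually_getElem?_eq_get?_prefixLimit hl i
  filter_upwards [hk] with n hn
  refine List.ext_getElem? fun i => ?_
  rw [getElem?_take, List.getElem?_take]
  split_ifs with hi
  · exact (hn i (Finset.mem_range.2 hi)).symm
  · rfl

theorem listPrefixSeq_prefixLimit (hl : ∀ ⦃m n⦄, m ≤ n → l m <+: l n) (n : ℕ) :
    ListPrefixSeq (l n) (prefixLimit l) := by
  obtain ⟨m, htake, hm⟩ :=
    ((eventually_take_prefixLimit hl (l n).length).and (Filter.eventually_ge_atTop n)).exists
  rw [ListPrefixSeq, htake]
  exact (List.prefix_iff_eq_take.1 (hl hm)).symm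

end Stream'.Seq

namespace Net

variable {S T : Type} {N : Net S T} {σ ρ κ : List T} {t u : T} {M M' : S → ℕ}

/-- Because of truncated subtraction, this is the marking reached by firing `t` only when `t` is
enabled at `M`. -/
def fire (N : Net S T) (t : T) (M : S → ℕ) : S → ℕ := fun s => M s - N.pre t s + N.post t s

theorem Enabled.fires (h : N.Enabled t M) : N.Fires t M (N.fire t M) := ⟨h, rfl⟩

theorem firesList_append :
    N.FiresList M (σ ++ ρ) M' ↔ ∃ M₁, N.FiresList M σ M₁ ∧ N.FiresList M₁ ρ M' := by
  induction σ generalizing M with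
  | nil => exact ⟨fun h => ⟨M, .nil M, h⟩, by rintro ⟨_, ⟨⟩, h⟩; exact h⟩
  | cons t σ ih =>
    constructor
    · rintro (_ | ⟨hf, h⟩)
      obtain ⟨M₁, h₁, h₂⟩ := ih.1 h
      exact ⟨M₁, .cons hf h₁, h₂⟩
    · rintro ⟨M₁, _ | ⟨hf, h₁⟩, h₂⟩
      exact .cons hf (ih.2 ⟨M₁, h₁, h₂⟩)

theorem FiresList.unique {M₁ M₂ : S → ℕ} (h₁ : N.FiresList M σ M₁) (h₂ : N.FiresList M σ M₂) :
    M₁ = M₂ := by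
  induction h₁ generalizing M₂ with
  | nil => cases h₂; rfl
  | cons hf _ ih =>
    obtain _ | ⟨hf', h'⟩ := h₂
    exact ih ((hf.2.trans hf'.2.symm) ▸ h')

theorem FS.of_prefix (h : N.FS σ) (hp : ρ <+: σ) : N.FS ρ := by
  obtain ⟨κ, rfl⟩ := hp
  obtain ⟨M, hM⟩ := h
  obtain ⟨M₁, h₁, -⟩ := firesList_append.1 hM
  exact ⟨M₁, h₁⟩

theorem FiresList.enabled_of_fs_append (hσ : N.FiresList N.M0 σ M) (h : N.FS (σ ++ [t])) :
    N.Enabled t M := by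
  obtain ⟨M', h'⟩ := h
  obtain ⟨M₁, h₁, _ | ⟨hf, -⟩⟩ := firesList_append.1 h'
  exact hσ.unique h₁ ▸ hf.1

theorem Enabled2.symm (h : N.Enabled2 t u M) : N.Enabled2 u t M := fun s => by
  have := h s; omega

theorem Enabled2.left (h : N.Enabled2 t u M) : N.Enabled t M := fun s => by
  have := h s; omega

theorem Enabled2.enabled_fire (h : N.Enabled2 t u M) : N.Enabled u (N.fire t M) := fun s => by
  have := h s; simp only [fire]; omega

theorem Enabled2.fire_comm (h : N.Enabled2 t u M) :
    N.fire u (N.fire t M) = N.fire t (N.fire u M) := funext fun s => by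
  have := h s; simp only [fire]; omega

theorem FiresList.swap (h2 : N.Enabled2 t u M) (h : N.FiresList M (t :: u :: σ) M') :
    N.FiresList M (u :: t :: σ) M' := by
  obtain _ | ⟨⟨-, rfl⟩, _ | ⟨⟨-, rfl⟩, hσ⟩⟩ := h
  exact .cons h2.symm.left.fires (.cons h2.symm.enabled_fire.fires (h2.fire_comm ▸ hσ))

theorem FiresList.append_swap {M₀ : S → ℕ} (hσ : N.FiresList M₀ σ M) (h2 : N.Enabled2 t u M)
    (h : N.FiresList M₀ (σ ++ t :: u :: ρ) M') : N.FiresList M₀ (σ ++ u :: t :: ρ) M' := by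
  obtain ⟨M₁, h₁, h₂⟩ := firesList_append.1 h
  exact firesList_append.2 ⟨M₁, h₁, FiresList.swap (hσ.unique h₁ ▸ h2) h₂⟩

theorem Adj.symm (h : N.Adj σ ρ) : N.Adj ρ σ := by
  obtain ⟨α, β, t, u, M, rfl, rfl, hα, h2, hσ, hρ⟩ := h
  exact ⟨α, β, u, t, M, rfl, rfl, hα, h2.symm, hρ, hσ⟩

theorem Adj.firesList (h : N.Adj σ ρ) (hσ : N.FiresList N.M0 σ M) : N.FiresList N.M0 ρ M := by
  obtain ⟨α, β, t, u, Mα, rfl, rfl, hα, h2, -, -⟩ := h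
  exact hα.append_swap h2 hσ

/-- The relation `≡₀*` on finite firing sequences. -/
abbrev AdjEquiv (N : Net S T) : List T → List T → Prop := ReflTransGen N.Adj

theorem AdjEquiv.symm (h : N.AdjEquiv σ ρ) : N.AdjEquiv ρ σ := by
  induction h with
  | refl => exact .refl
  | tail _ hadj ih => exact ih.head hadj.symm

theorem AdjEquiv.firesList (h : N.AdjEquiv σ ρ) (hσ : N.FiresList N.M0 σ M) :
    N.FiresList N.M0 ρ M := by
  induction h with
  | refl => exact hσ
  | tail _ hadj ih => exact hadj.firesList ih

theorem AdjEquiv.fs (h : N.AdjEquiv σ ρ) (hσ : N.FS σ) : N.FS ρ :=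
  hσ.imp fun _ => h.firesList

theorem AdjEquiv.fs_append (h : N.AdjEquiv σ ρ) (hσ : N.FS (σ ++ κ)) : N.FS (ρ ++ κ) := by
  obtain ⟨M, hM⟩ := hσ
  obtain ⟨M₁, h₁, h₂⟩ := firesList_append.1 hM
  exact ⟨M, firesList_append.2 ⟨M₁, h.firesList h₁, h₂⟩⟩

theorem Adj.append_right (h : N.Adj σ ρ) (hσ : N.FS (σ ++ κ)) : N.Adj (σ ++ κ) (ρ ++ κ) := by
  have hρ := AdjEquiv.fs_append (ReflTransGen.single h) hσ
  obtain ⟨α, β, t, u, M, rfl, rfl, hα, h2, -, -⟩ := h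
  exact ⟨α, β ++ κ, t, u, M, by simp, by simp, hα, h2, hσ, hρ⟩

theorem AdjEquiv.append_right (h : N.AdjEquiv σ ρ) (hσ : N.FS (σ ++ κ)) :
    N.AdjEquiv (σ ++ κ) (ρ ++ κ) := by
  induction h with
  | refl => exact .refl
  | tail hab hadj ih => exact ih.tail (hadj.append_right (AdjEquiv.fs_append hab hσ))

namespace BinaryConflictFree

theorem enabled2 (hN : N.BinaryConflictFree) (hσ : N.FiresList N.M0 σ M)
    (hu : N.FS (σ ++ [u])) (ht : N.FS (σ ++ [t])) (hne : u ≠ t) : N.Enabled2 u t M :=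
  hN M ⟨σ, hσ⟩ u t hne (hσ.enabled_of_fs_append hu) (hσ.enabled_of_fs_append ht)

theorem fs_append_pair (hN : N.BinaryConflictFree) (hu : N.FS (σ ++ [u]))
    (ht : N.FS (σ ++ [t])) (hne : u ≠ t) : N.FS (σ ++ [u, t]) := by
  obtain ⟨M, hσ⟩ := ht.of_prefix (List.prefix_append _ _)
  have h2 := hN.enabled2 hσ hu ht hne
  exact ⟨_, firesList_append.2 ⟨M, hσ, .cons h2.left.fires (.cons h2.enabled_fire.fires (.nil _))⟩⟩

theorem fs_append_of_notMem (hN : N.BinaryConflictFree) (ht : N.FS (σ ++ [t]))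
    (hρ : N.FS (σ ++ ρ)) (hmem : t ∉ ρ) : N.FS (σ ++ ρ ++ [t]) := by
  induction ρ generalizing σ with
  | nil => simpa using ht
  | cons u ρ ih =>
    have hne : u ≠ t := by rintro rfl; exact hmem (.head _)
    have hu : N.FS (σ ++ [u]) := hρ.of_prefix (by simp)
    simpa using ih (σ := σ ++ [u]) (by simpa using hN.fs_append_pair hu ht hne)
      (by simpa using hρ) (fun h => hmem (.tail _ h))

theorem adj_swap (hN : N.BinaryConflictFree) (hu : N.FS (σ ++ [u])) (ht : N.FS (σ ++ [t]))
    (hne : u ≠ t) (h : N.FS (σ ++ u :: t :: ρ)) : N.Adj (σ ++ u :: t :: ρ) (σ ++ t :: u :: ρ) := by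
  obtain ⟨M, hσ⟩ := ht.of_prefix (List.prefix_append _ _)
  have h2 := hN.enabled2 hσ hu ht hne
  obtain ⟨M', hM'⟩ := h
  exact ⟨σ, ρ, u, t, M, rfl, rfl, hσ, h2, ⟨M', hM'⟩, M', hσ.append_swap h2 hM'⟩

theorem adjEquiv_move_front (hN : N.BinaryConflictFree) (ht : N.FS (σ ++ [t])) (hmem : t ∉ ρ)
    (h : N.FS (σ ++ ρ ++ t :: κ)) : N.AdjEquiv (σ ++ ρ ++ t :: κ) (σ ++ t :: (ρ ++ κ)) := by
  induction ρ generalizing σ with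
  | nil => simpa using ReflTransGen.refl
  | cons u ρ ih =>
    have hne : u ≠ t := by rintro rfl; exact hmem (.head _)
    have hu : N.FS (σ ++ [u]) := h.of_prefix (by simp)
    have hσu : N.AdjEquiv (σ ++ u :: ρ ++ t :: κ) (σ ++ u :: t :: (ρ ++ κ)) := by
      simpa using ih (σ := σ ++ [u]) (by simpa using hN.fs_append_pair hu ht hne)
        (fun h => hmem (.tail _ h)) (by simpa using h)
    exact hσu.tail (hN.adj_swap hu ht hne (hσu.fs h))

end BinaryConflictFree

section Schedule

variable (N) (g : ℕ → Option T)

open Classical in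
/-- Step `n` tries the transition `g n.unpair.1`, so every index of `g` is tried infinitely
often. -/
noncomputable def schedule : ℕ → List T
  | 0 => []
  | n + 1 =>
    match g n.unpair.1 with
    | some t => if N.FS (schedule n ++ [t]) then schedule n ++ [t] else schedule n
    | none => schedule n

theorem schedule_succ_eq (n : ℕ) :
    N.schedule g (n + 1) = N.schedule g n ∨ ∃ t, N.schedule g (n + 1) = N.schedule g n ++ [t] := by
  rw [schedule]
  split
  · split_ifs
    exacts [.inr ⟨_, rfl⟩, .inl rfl]
  · exact .inl rfl

theorem schedule_succ_of_fs {n : ℕ} (hg : g n.unpair.1 = some t)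
    (ht : N.FS (N.schedule g n ++ [t])) : N.schedule g (n + 1) = N.schedule g n ++ [t] := by
  rw [schedule, hg]
  exact if_pos ht

theorem fs_schedule (n : ℕ) : N.FS (N.schedule g n) := by
  induction n with
  | zero => exact ⟨N.M0, .nil _⟩
  | succ n ih =>
    rw [schedule]
    split
    · split_ifs with ht
      exacts [ht, ih]
    · exact ih

theorem schedule_mono ⦃m n : ℕ⦄ (h : m ≤ n) : N.schedule g m <+: N.schedule g n := by
  induction n, h using Nat.le_induction with
  | base => exact List.prefix_refl _
  | succ n _ ih =>
    rcases N.schedule_succ_eq g n with h | ⟨t, h⟩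
    · exact h ▸ ih
    · exact h ▸ ih.trans (List.prefix_append _ _)

variable {N g}

theorem BinaryConflictFree.exists_schedule_eq_append_singleton (hN : N.BinaryConflictFree)
    (hg : Function.Surjective g) {m : ℕ} (ht : N.FS (N.schedule g m ++ [t])) :
    ∃ n η, t ∉ η ∧ N.schedule g n = N.schedule g m ++ η ++ [t] := by
  obtain ⟨i, hi⟩ := hg (some t)
  have hblock : ∀ n, m ≤ n → (∃ n' η, t ∉ η ∧ N.schedule g n' = N.schedule g m ++ η ++ [t]) ∨
      ∃ η, t ∉ η ∧ N.schedule g n = N.schedule g m ++ η := by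
    intro n hn
    induction n, hn using Nat.le_induction with
    | base => exact .inr ⟨[], by simp, by simp⟩
    | succ n _ ih =>
      obtain hfired | ⟨η, hη, hn⟩ := ih
      · exact .inl hfired
      rcases N.schedule_succ_eq g n with h | ⟨u, h⟩
      · exact .inr ⟨η, hη, h.trans hn⟩
      by_cases hu : u = t
      · exact .inl ⟨n + 1, η, hη, by rw [h, hn, hu]⟩
      · exact .inr ⟨η ++ [u], by simp [hη, Ne.symm hu], by rw [h, hn, List.append_assoc]⟩
  -- step `Nat.pair i m ≥ m` tries `t`, which is still enabled there if it has not been fired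
  obtain hfired | ⟨η, hη, hn⟩ := hblock _ (Nat.right_le_pair i m)
  · exact hfired
  · have htn : N.FS (N.schedule g (Nat.pair i m) ++ [t]) :=
      hn ▸ hN.fs_append_of_notMem ht (hn ▸ N.fs_schedule g _) hη
    exact ⟨_, η, hη, by rw [N.schedule_succ_of_fs g (by simpa using hi) htn, hn]⟩

theorem BinaryConflictFree.exists_schedule_adjEquiv_cons (hN : N.BinaryConflictFree)
    (hg : Function.Surjective g) {m : ℕ} (hm : N.AdjEquiv (N.schedule g m) (σ ++ ρ))
    (ht : N.FS (σ ++ [t])) : ∃ n ρ', N.AdjEquiv (N.schedule g n) (σ ++ t :: ρ') := by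
  suffices ∃ n ρ₁ ρ₂, t ∉ ρ₁ ∧ N.AdjEquiv (N.schedule g n) (σ ++ ρ₁ ++ t :: ρ₂) by
    obtain ⟨n, ρ₁, ρ₂, hmem, hn⟩ := this
    exact ⟨n, ρ₁ ++ ρ₂, hn.trans (hN.adjEquiv_move_front ht hmem (hn.fs (N.fs_schedule g n)))⟩
  by_cases hmem : t ∈ ρ
  · obtain ⟨ρ₁, ρ₂, rfl, hρ₁⟩ := List.eq_append_cons_of_mem hmem
    exact ⟨m, ρ₁, ρ₂, hρ₁, by simpa using hm⟩
  · have hmt : N.FS (N.schedule g m ++ [t]) :=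
      hm.symm.fs_append (hN.fs_append_of_notMem ht (hm.fs (N.fs_schedule g m)) hmem)
    obtain ⟨n, η, hη, hn⟩ := hN.exists_schedule_eq_append_singleton hg hmt
    refine ⟨n, ρ ++ η, [], by simp [hmem, hη], ?_⟩
    rw [hn]
    simpa using hm.append_right (κ := η ++ [t]) (by simpa [hn] using N.fs_schedule g n)

theorem BinaryConflictFree.exists_schedule_adjEquiv_append (hN : N.BinaryConflictFree)
    (hg : Function.Surjective g) (hσ : N.FS σ) : ∃ n ρ, N.AdjEquiv (N.schedule g n) (σ ++ ρ) := by
  induction σ using List.reverseRecOn with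
  | nil => exact ⟨0, [], .refl⟩
  | append_singleton σ t ih =>
    obtain ⟨m, ρ, hm⟩ := ih (hσ.of_prefix (List.prefix_append _ _))
    obtain ⟨n, ρ', hn⟩ := hN.exists_schedule_adjEquiv_cons hg hm hσ
    exact ⟨n, ρ', by simpa using hn⟩

end Schedule

end Net

theorem largest_fs_process {S T : Type} (N : Net S T)
    (hcount : Countable T) (hN : N.BinaryConflictFree) :
    ∃ ρ : Stream'.Seq T, N.FSInf ρ ∧
      ∀ σ : Stream'.Seq T, N.FSInf σ → N.Sqsubseteq0 σ ρ := by
  obtain ⟨g, hg⟩ := exists_surjective_nat (Option T)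
  refine ⟨Stream'.Seq.prefixLimit (N.schedule g), fun k => ?_, fun σ _ σ'' hσ'' _ => ?_⟩
  · obtain ⟨n, hn⟩ := (Stream'.Seq.eventually_take_prefixLimit (N.schedule_mono g) k).exists
    exact hn ▸ (N.fs_schedule g n).of_prefix (List.take_prefix _ _)
  · obtain ⟨n, δ, hn⟩ := hN.exists_schedule_adjEquiv_append hg hσ''
    exact ⟨σ'' ++ δ, _, hn.fs (N.fs_schedule g n), N.fs_schedule g n, List.prefix_append _ _,
      hn.symm, Stream'.Seq.listPrefixSeq_prefixLimit (N.schedule_mono g) n⟩
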